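/- arXiv:solv-int/9907008 — 3 statements merged into one kernel-verified Lean document; each statement's English description precedes it below -/
import Mathlib

section
/- For every integer n > 0 and real numbers x_0 < x_1 < ... < x_{2n-1}, the sum over all n-element subsets S of {0,1,...,2n-1} of Δ(x_S)·Δ(x_{S^c}) equals 2^n · Δ(x_{even indices}) · Δ(x_{odd indices}), where x_S denotes the tuple of x_i for i ∈ S in increasing order. -/
/-- The Vandermonde product over the indices in a finite set `S`:
`∏_{i<j, i,j ∈ S} (x j - x i)`.  Since `x` is strictly increasing, this equals
the Vandermonde product of the increasingly ordered tuple `x_S`. -/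
def vand {m : ℕ} (x : Fin m → ℝ) (S : Finset (Fin m)) : ℝ :=
  ∏ p ∈ (S ×ˢ S).filter (fun p => p.1 < p.2), (x p.2 - x p.1)

/-!
Let `M` be the `2n × 2n` matrix whose row `i` is
`(1, x_i, …, x_i^{n-1}, ε_i, ε_i x_i, …, ε_i x_i^{n-1})` with `ε_i = (-1)^i`.
The Laplace expansion along the first `n` columns writes `det M` as a sum of
`± Δ(x_S) Δ(x_{Sᶜ})` over the `n`-subsets `S`. The sign is that of the shuffle listing `S` before
`Sᶜ`, times `∏_{c ∈ Sᶜ} ε_c`, and it does not depend on `S`: moving an element of `S` down by one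
changes both factors by `-1`, and such moves connect all `n`-subsets.
On the other hand, ordering the rows as even ones followed by odd ones turns `M` into
`[[V, V], [W, -W]]`, with `V`, `W` the Vandermonde matrices of `x_even`, `x_odd`, whose determinant
is `(-2)^n det V det W`. As every `Δ` is positive for increasing `x`, comparing absolute values
gives the identity.
-/

open Finset Equiv Matrix

theorem Equiv.strictMonoOn_swap {α : Type*} [LinearOrder α] {a b : α} {s : Set α} (hab : a ⋖ b)
    (hs : ¬ (a ∈ s ∧ b ∈ s)) : StrictMonoOn (swap a b) s := by
  intro x hx y hy hxy
  simp only [swap_apply_def]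
  split_ifs <;> grind [CovBy]

namespace Finset

theorem orderEmbOfFin_eq_of_strictMonoOn {α β : Type*} [LinearOrder α] [LinearOrder β] {k : ℕ}
    {S : Finset α} {T : Finset β} (hS : #S = k) (hT : #T = k) {f : α → β}
    (hf : StrictMonoOn f S) (hfST : ∀ x ∈ S, f x ∈ T) (a : Fin k) :
    T.orderEmbOfFin hT a = f (S.orderEmbOfFin hS a) := by
  refine (congrFun (orderEmbOfFin_unique hT (fun a => hfST _ (S.orderEmbOfFin_mem hS a))
    fun a b hab => hf (S.orderEmbOfFin_mem hS a) (S.orderEmbOfFin_mem hS b)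
      ((S.orderEmbOfFin hS).strictMono hab)) a).symm

theorem exists_covBy_notMem_mem {α : Type*} [LinearOrder α] [LocallyFiniteOrder α]
    {S : Finset α} {i j : α} (hji : j < i) (hj : j ∉ S) (hi : i ∈ S) :
    ∃ a b, a ⋖ b ∧ a ∉ S ∧ b ∈ S := by
  have hne : (S.filter (j < ·)).Nonempty := ⟨i, mem_filter.mpr ⟨hi, hji⟩⟩
  set b := (S.filter (j < ·)).min' hne
  obtain ⟨hb, hjb⟩ := mem_filter.mp ((S.filter (j < ·)).min'_mem hne)
  obtain ⟨a, hja, hab⟩ := exists_le_covBy_of_lt hjb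
  refine ⟨a, b, hab, fun ha => ?_, hb⟩
  have hja' : j < a := lt_of_le_of_ne hja fun h => hj (h ▸ ha)
  exact (min'_le _ a (mem_filter.mpr ⟨ha, hja'⟩)).not_gt hab.lt

theorem induction_on_covBy_swap {m k : ℕ} {P : Finset (Fin m) → Prop}
    (base : P {i | (i : ℕ) < k})
    (step : ∀ S a b, a ⋖ b → a ∉ S → b ∈ S → P (S.map (swap a b).toEmbedding) → P S)
    (S : Finset (Fin m)) (hS : #S = k) : P S := by
  induction hsum : ∑ i ∈ S, (i : ℕ) using Nat.strong_induction_on generalizing S with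
  | _ s ih =>
  by_cases hlower : ∀ i j, j ≤ i → i ∈ S → j ∈ S
  · convert base
    ext j
    rw [mem_filter, ← Fin.lt_card_filter_univ_iff_apply_of_imp _ hlower, filter_mem_eq_inter,
      univ_inter, hS]
    simp
  push Not at hlower
  obtain ⟨i, j, hji, hi, hj⟩ := hlower
  obtain ⟨a, b, hab, ha, hb⟩ :=
    exists_covBy_notMem_mem (lt_of_le_of_ne hji (by rintro rfl; exact hj hi)) hj hi
  refine step S a b hab ha hb (ih _ ?_ _ (by simpa using hS) rfl)
  rw [← hsum, sum_map, ← sum_erase_add _ _ hb, ← sum_erase_add _ _ hb, coe_toEmbedding,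
    swap_apply_right]
  have : ∑ x ∈ S.erase b, ((swap a b x : Fin m) : ℕ) = ∑ x ∈ S.erase b, (x : ℕ) :=
    sum_congr rfl fun x hx => by
      rw [swap_apply_of_ne_of_ne (by rintro rfl; exact ha (mem_of_mem_erase hx))
        (ne_of_mem_erase hx)]
  rw [this]
  have := hab.lt
  omega

section Shuffle

variable {ι : Type*} [Fintype ι] [LinearOrder ι] {k l : ℕ}

def shuffleEquiv (S : Finset ι) (hS : #S = k) (hSc : #Sᶜ = l) : Fin k ⊕ Fin l ≃ ι :=
  (Equiv.sumCongr (S.orderIsoOfFin hS).toEquiv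
    ((Sᶜ.orderIsoOfFin hSc).toEquiv.trans (Equiv.subtypeEquivRight fun _ => mem_compl))).trans
    (Equiv.sumCompl (· ∈ S))

variable (S : Finset ι) (hS : #S = k) (hSc : #Sᶜ = l)

@[simp] lemma shuffleEquiv_inl (a : Fin k) :
    S.shuffleEquiv hS hSc (.inl a) = S.orderEmbOfFin hS a := rfl

@[simp] lemma shuffleEquiv_inr (b : Fin l) :
    S.shuffleEquiv hS hSc (.inr b) = Sᶜ.orderEmbOfFin hSc b := rfl

lemma shuffleEquiv_mem_iff (z : Fin k ⊕ Fin l) : S.shuffleEquiv hS hSc z ∈ S ↔ z.isLeft := by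
  cases z with
  | inl a => simp
  | inr b => simpa using mem_compl.mp (Sᶜ.orderEmbOfFin_mem hSc b)

lemma shuffleEquiv_map_swap {a b : ι} (hab : a ⋖ b) (ha : a ∉ S) (hb : b ∈ S)
    (hS' : #(S.map (swap a b).toEmbedding) = k) (hSc' : #(S.map (swap a b).toEmbedding)ᶜ = l) :
    (S.map (swap a b).toEmbedding).shuffleEquiv hS' hSc' =
      (S.shuffleEquiv hS hSc).trans (swap a b) := by
  ext (c | c) <;> simp only [shuffleEquiv_inl, shuffleEquiv_inr, trans_apply]
  · refine (orderEmbOfFin_eq_of_strictMonoOn hS hS' (strictMonoOn_swap hab ?_) fun x hx => ?_) c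
    · simp [ha]
    · simpa using hx
  · refine (orderEmbOfFin_eq_of_strictMonoOn hSc hSc' (strictMonoOn_swap hab ?_) fun x hx => ?_) c
    · simp [hb]
    · simpa using hx

end Shuffle

section Fin

variable {m k l : ℕ}

def twistedShuffleSign (e : Fin k ⊕ Fin l ≃ Fin m) (S : Finset (Fin m)) (hS : #S = k)
    (hSc : #Sᶜ = l) : ℤˣ :=
  Perm.sign ((S.shuffleEquiv hS hSc).trans e.symm) * ∏ c ∈ Sᶜ, (-1) ^ (c : ℕ)

lemma twistedShuffleSign_map_swap (e : Fin k ⊕ Fin l ≃ Fin m) {S : Finset (Fin m)} (hS : #S = k)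
    (hSc : #Sᶜ = l) {a b : Fin m} (hab : a ⋖ b) (ha : a ∉ S) (hb : b ∈ S)
    (hS' : #(S.map (swap a b).toEmbedding) = k) (hSc' : #(S.map (swap a b).toEmbedding)ᶜ = l) :
    twistedShuffleSign e _ hS' hSc' = twistedShuffleSign e S hS hSc := by
  have hsign : ((S.shuffleEquiv hS hSc).trans (swap a b)).trans e.symm =
      ((S.shuffleEquiv hS hSc).trans e.symm).trans
        ((e.symm.symm.trans (swap a b)).trans e.symm) := by
    ext; simp only [trans_apply, symm_symm, apply_symm_apply]
  have hcompl : (S.map (swap a b).toEmbedding)ᶜ = Sᶜ.map (swap a b).toEmbedding := by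
    ext; simp
  have hb' : (b : ℕ) = a + 1 := (Nat.covBy_iff_add_one_eq.mp (Fin.covBy_iff.mp hab)).symm
  have hprod : ∏ c ∈ Sᶜ, (-1 : ℤˣ) ^ ((swap a b c : Fin m) : ℕ) = -∏ c ∈ Sᶜ, (-1) ^ (c : ℕ) := by
    have ha' : a ∈ Sᶜ := mem_compl.mpr ha
    rw [← mul_prod_erase _ _ ha', ← mul_prod_erase _ _ ha', swap_apply_left, hb', pow_succ,
      mul_neg_one, neg_mul]
    congr 2
    refine prod_congr rfl fun c hc => ?_
    rw [swap_apply_of_ne_of_ne (ne_of_mem_erase hc)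
      (by rintro rfl; exact mem_compl.mp (mem_of_mem_erase hc) hb)]
  rw [twistedShuffleSign, twistedShuffleSign, shuffleEquiv_map_swap S hS hSc hab ha hb, hsign,
    Perm.sign_trans, Perm.sign_symm_trans_trans, Perm.sign_swap hab.ne, hcompl, prod_map]
  simp only [coe_toEmbedding, hprod, neg_mul, one_mul, mul_neg, neg_neg]

theorem exists_twistedShuffleSign_eq (e : Fin k ⊕ Fin l ≃ Fin m) :
    ∃ ε : ℤˣ, ∀ S hS hSc, twistedShuffleSign e S hS hSc = ε := by
  have hm : m = k + l := by simpa using (Fintype.card_congr e).symm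
  have h₀ : #({i | (i : ℕ) < k} : Finset (Fin m)) = k := by simp [Fin.card_filter_val_lt]; omega
  have h₀c : #({i | (i : ℕ) < k} : Finset (Fin m))ᶜ = l := by
    rw [card_compl, h₀, Fintype.card_fin]; omega
  refine ⟨twistedShuffleSign e _ h₀ h₀c, fun S hS => ?_⟩
  refine induction_on_covBy_swap
    (P := fun X => ∀ hX hXc, twistedShuffleSign e X hX hXc = twistedShuffleSign e _ h₀ h₀c)
    (fun _ _ => rfl) (fun X a b hab ha hb ih hX hXc => ?_) S hS hS
  rw [← twistedShuffleSign_map_swap e hX hXc hab ha hb (by simpa using hX)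
    (by rwa [card_compl, card_map, ← card_compl])]
  exact ih _ _

end Fin

end Finset

namespace Matrix

variable {ι R : Type*} [Fintype ι] [DecidableEq ι] [CommRing R] {k l : ℕ}

theorem det_submatrix_eq_sum_sign_mul_det_mul_det (e : Fin k ⊕ Fin l ≃ ι)
    (σ : {S : Finset ι // #S = k} → (Fin k ⊕ Fin l ≃ ι))
    (hσ : ∀ S z, σ S z ∈ S.1 ↔ z.isLeft) (M : Matrix ι (Fin k ⊕ Fin l) R) :
    (M.submatrix e id).det = ∑ S, (Perm.sign ((σ S).trans e.symm) : R) *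
      ((of fun a b => M (σ S (.inl a)) (.inl b)).det *
      (of fun a b => M (σ S (.inr a)) (.inr b)).det) := by
  set Φ : {S : Finset ι // #S = k} × (Perm (Fin k) × Perm (Fin l)) → Perm (Fin k ⊕ Fin l) :=
    fun p => (Perm.sumCongrHom _ _ p.2).trans ((σ p.1).trans e.symm) with hΦ
  have hΦ_bij : Function.Bijective Φ := by
    constructor
    · rintro ⟨S, τ⟩ ⟨S', τ'⟩ h
      have hf : ∀ z, σ S (Perm.sumCongrHom _ _ τ z) = σ S' (Perm.sumCongrHom _ _ τ' z) :=
        fun z => by simpa [hΦ] using congrArg e (DFunLike.congr_fun h z)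
      obtain rfl : S = S' := by
        refine Subtype.ext (Finset.ext fun y => ?_)
        obtain ⟨z, rfl⟩ := ((Perm.sumCongrHom _ _ τ).trans (σ S)).surjective y
        rw [Equiv.trans_apply, hσ, hf, hσ]
        cases z <;> rfl
      exact Prod.ext rfl <| Perm.sumCongrHom_injective <|
        Equiv.ext fun z => (σ S).injective (hf z)
    · intro π
      set f := π.trans e
      set S : {S : Finset ι // #S = k} := ⟨univ.image (f ∘ .inl),
        by simp [card_image_of_injective _ (f.injective.comp Sum.inl_injective)]⟩
      have hmaps : Set.MapsTo (f.trans (σ S).symm) (Set.range .inl) (Set.range .inl) := by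
        rintro _ ⟨a, rfl⟩
        obtain ⟨b, hb⟩ := Sum.isLeft_iff.mp ((hσ S ((σ S).symm (f (.inl a)))).mp (by simp [S]))
        exact ⟨b, hb.symm⟩
      obtain ⟨τ, hτ⟩ := Perm.mem_sumCongrHom_range_of_perm_mapsTo_inl hmaps
      refine ⟨(S, τ), ?_⟩
      simp only [hΦ, hτ]
      ext z
      simp [f]
  rw [det_apply', ← hΦ_bij.sum_comp, Fintype.sum_prod_type]
  refine sum_congr rfl fun S _ => ?_
  rw [det_apply', det_apply', sum_mul_sum, mul_sum, Fintype.sum_prod_type]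
  refine sum_congr rfl fun τ₁ _ => ?_
  rw [mul_sum]
  refine sum_congr rfl fun τ₂ _ => ?_
  simp only [hΦ, Perm.sumCongrHom_apply, Perm.sign_trans, Perm.sign_sumCongr, Units.val_mul,
    Int.cast_mul, trans_apply, sumCongr_apply, submatrix_apply, apply_symm_apply, id_eq,
    Fintype.prod_sum_type, Sum.map_inl, Sum.map_inr, of_apply]
  ring

lemma det_fromBlocks_self_neg {n R : Type*} [Fintype n] [DecidableEq n] [CommRing R]
    (A B : Matrix n n R) :
    (fromBlocks A A B (-B)).det = (-2) ^ Fintype.card n * A.det * B.det := by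
  have : fromBlocks A A B (-B) = fromBlocks A 0 0 B * fromBlocks 1 1 1 (-1) := by
    simp [fromBlocks_multiply]
  rw [this, det_mul, det_fromBlocks_zero₂₁, det_fromBlocks_one₁₁, mul_one,
    show (-1 : Matrix n n R) - 1 = (-2 : R) • 1 by module, det_smul, det_one]
  ring

end Matrix

lemma vand_map {k m : ℕ} (x : Fin m → ℝ) (f : Fin k ↪o Fin m) (S : Finset (Fin k)) :
    vand x (S.map f.toEmbedding) = vand (x ∘ f) S := by
  have : (S.map f.toEmbedding ×ˢ S.map f.toEmbedding).filter (fun p => p.1 < p.2) =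
      ((S ×ˢ S).filter (fun p => p.1 < p.2)).map (f.toEmbedding.prodMap f.toEmbedding) := by
    ext ⟨u, v⟩
    simp only [mem_filter, mem_product, mem_map, RelEmbedding.coe_toEmbedding,
      Function.Embedding.prodMap, Prod.mk.injEq, Prod.exists, Function.Embedding.coeFn_mk, Prod.map]
    constructor
    · rintro ⟨⟨⟨a, ha, rfl⟩, b, hb, rfl⟩, h⟩
      exact ⟨a, b, ⟨⟨ha, hb⟩, f.lt_iff_lt.mp h⟩, rfl, rfl⟩
    · rintro ⟨a, b, ⟨⟨ha, hb⟩, h⟩, rfl, rfl⟩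
      exact ⟨⟨⟨a, ha, rfl⟩, b, hb, rfl⟩, f.lt_iff_lt.mpr h⟩
  rw [vand, vand, this, prod_map]
  rfl

lemma vand_univ_eq_det_vandermonde {k : ℕ} (y : Fin k → ℝ) :
    vand y univ = (vandermonde y).det := by
  rw [det_vandermonde, vand, univ_product_univ, prod_filter, Fintype.prod_prod_type]
  refine prod_congr rfl fun i _ => ?_
  rw [← prod_filter]
  congr 1
  ext; simp

lemma vand_eq_det_vandermonde_orderEmbOfFin {k m : ℕ} (x : Fin m → ℝ) (S : Finset (Fin m))
    (hS : #S = k) : vand x S = (vandermonde (x ∘ S.orderEmbOfFin hS)).det := by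
  rw [← vand_univ_eq_det_vandermonde, ← vand_map, map_orderEmbOfFin_univ]

lemma vand_pos {m : ℕ} {x : Fin m → ℝ} (hx : StrictMono x) (S : Finset (Fin m)) :
    0 < vand x S :=
  prod_pos fun _ hp => sub_pos.mpr (hx (mem_filter.mp hp).2)

def alternatingVandermonde {m : ℕ} (x : Fin m → ℝ) (k l : ℕ) : Matrix (Fin m) (Fin k ⊕ Fin l) ℝ :=
  of fun i => Sum.elim (fun b => x i ^ (b : ℕ)) (fun b => (-1) ^ (i : ℕ) * x i ^ (b : ℕ))

theorem exists_det_alternatingVandermonde_submatrix {m k l : ℕ} (x : Fin m → ℝ)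
    (e : Fin k ⊕ Fin l ≃ Fin m) : ∃ ε : ℤˣ, ((alternatingVandermonde x k l).submatrix e id).det =
      ε * ∑ S ∈ powersetCard k univ, vand x S * vand x Sᶜ := by
  obtain ⟨ε, hε⟩ := exists_twistedShuffleSign_eq e
  have hm : m = k + l := by simpa using (Fintype.card_congr e).symm
  have hc (S : Finset (Fin m)) (hS : #S = k) : #Sᶜ = l := by
    rw [card_compl, Fintype.card_fin, hS]; omega
  refine ⟨ε, ?_⟩
  rw [det_submatrix_eq_sum_sign_mul_det_mul_det e (fun S => S.1.shuffleEquiv S.2 (hc _ S.2))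
    (fun S => S.1.shuffleEquiv_mem_iff _ _), mul_sum, sum_subtype _ fun _ => mem_powersetCard_univ]
  refine Fintype.sum_congr _ _ fun ⟨S, hS⟩ => ?_
  set σ := S.shuffleEquiv hS (hc S hS)
  have hA : (of fun a b => alternatingVandermonde x k l (σ (.inl a)) (.inl b)).det = vand x S := by
    rw [vand_eq_det_vandermonde_orderEmbOfFin x S hS]
    rfl
  have hB : (of fun a b => alternatingVandermonde x k l (σ (.inr a)) (.inr b)).det =
      (∏ c ∈ Sᶜ, (-1) ^ (c : ℕ)) * vand x Sᶜ := by
    have hprod : ∏ c ∈ Sᶜ, ((-1 : ℝ) ^ (c : ℕ)) =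
        ∏ a, (-1) ^ (Sᶜ.orderEmbOfFin (hc S hS) a : ℕ) := by
      conv_lhs => rw [← map_orderEmbOfFin_univ Sᶜ (hc S hS)]
      rw [prod_map]
      rfl
    rw [hprod, ← det_diagonal, vand_eq_det_vandermonde_orderEmbOfFin x Sᶜ (hc S hS), ← det_mul]
    congr 1
    ext a b
    simp [σ, alternatingVandermonde, diagonal_mul, vandermonde]
  rw [hA, hB, ← hε S hS (hc S hS), twistedShuffleSign]
  push_cast
  ring

def evenOddEquiv (n : ℕ) : Fin n ⊕ Fin n ≃ Fin (2 * n) where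
  toFun := Sum.elim (fun a => ⟨2 * a, by omega⟩) (fun a => ⟨2 * a + 1, by omega⟩)
  invFun i := if (i : ℕ) % 2 = 0 then .inl ⟨i / 2, by omega⟩ else .inr ⟨i / 2, by omega⟩
  left_inv := by rintro (a | a) <;> simp [Fin.ext_iff]; omega
  right_inv i := by by_cases h : (i : ℕ) % 2 = 0 <;> simp [h, Fin.ext_iff] <;> omega

lemma det_alternatingVandermonde_submatrix_evenOddEquiv {n : ℕ} (x : Fin (2 * n) → ℝ) :
    ((alternatingVandermonde x n n).submatrix (evenOddEquiv n) id).det =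
      (-2) ^ n * vand (fun i : Fin n => x ⟨2 * i.1, by omega⟩) univ *
        vand (fun i : Fin n => x ⟨2 * i.1 + 1, by omega⟩) univ := by
  have : (alternatingVandermonde x n n).submatrix (evenOddEquiv n) id =
      fromBlocks (vandermonde fun i : Fin n => x ⟨2 * i.1, by omega⟩)
        (vandermonde fun i : Fin n => x ⟨2 * i.1, by omega⟩)
        (vandermonde fun i : Fin n => x ⟨2 * i.1 + 1, by omega⟩)
        (-vandermonde fun i : Fin n => x ⟨2 * i.1 + 1, by omega⟩) := by
    ext (a | a) (b | b) <;> simp [alternatingVandermonde, evenOddEquiv, pow_succ, pow_mul]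
  rw [this, det_fromBlocks_self_neg, Fintype.card_fin, vand_univ_eq_det_vandermonde,
    vand_univ_eq_det_vandermonde]

/-- For `x_0 < x_1 < ⋯ < x_{2n-1}`, the sum over `n`-element subsets `S` of
`Δ(x_S) Δ(x_{Sᶜ})` equals `2^n Δ(x_even) Δ(x_odd)`. -/
theorem sum_vandermonde_pairs_even (n : ℕ) (x : Fin (2 * n) → ℝ)
    (hx : StrictMono x) :
    (∑ S ∈ Finset.powersetCard n (Finset.univ : Finset (Fin (2 * n))),
        vand x S * vand x Sᶜ)
      = 2 ^ n *
        vand (fun i : Fin n => x ⟨2 * i.1, by have := i.2; omega⟩) Finset.univ *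
        vand (fun i : Fin n => x ⟨2 * i.1 + 1, by have := i.2; omega⟩) Finset.univ := by
  obtain ⟨ε, hε⟩ := exists_det_alternatingVandermonde_submatrix x (evenOddEquiv n)
  have h := congrArg abs (hε.symm.trans (det_alternatingVandermonde_submatrix_evenOddEquiv x))
  have hsum : 0 ≤ ∑ S ∈ powersetCard n univ, vand x S * vand x Sᶜ :=
    sum_nonneg fun S _ => (mul_pos (vand_pos hx S) (vand_pos hx Sᶜ)).le
  have hunit : |((ε : ℤ) : ℝ)| = 1 := by rcases Int.units_eq_one_or ε with rfl | rfl <;> simp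
  rwa [abs_mul, hunit, one_mul, abs_of_nonneg hsum, abs_mul, abs_mul, abs_pow, abs_neg, abs_two,
    abs_of_pos (vand_pos ?_ _), abs_of_pos (vand_pos ?_ _)] at h
  all_goals exact fun a b hab => hx (Fin.mk_lt_mk.mpr (by omega))
end

section
/- For every integer n > 0 and real numbers x_0 < x_1 < ... < x_{2n}, the sum over all (n+1)-element subsets S of {0,1,...,2n} of Δ(x_S)·Δ(x_{S^c}) equals 2^n · Δ(x_0,x_2,...,x_{2n}) · Δ(x_1,x_3,...,x_{2n-1}). -/
/-!
Both sides are polynomials in the `x i`, so it suffices to treat distinct values in an integral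
domain. Induct on the number of points: with `x₀, …, x_{m-1}` fixed, the sum for `m + 1` points
is a polynomial in `y = x_m` of degree at most `⌊m/2⌋`. By induction (and, for odd `m`, the
symmetry `S ↔ Sᶜ`) its coefficient of `y ^ ⌊m/2⌋` is `2^⌈m/2⌉ Δ(x_even) Δ(x_odd)` on the first
`m` points. It vanishes at `y = x_j` whenever `j ≡ m [MOD 2]`: swapping `j` and `m` in `S`
reverses the sign of `Δ(x_S) Δ(x_{Sᶜ})`, because an odd number `m - j - 1` of indices lies
between them. These `⌊m/2⌋` roots and the top coefficient determine the polynomial, and the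
resulting product is exactly the right-hand side for `m + 1` points.
-/

open Finset Polynomial

section swap

variable {α : Type*} [DecidableEq α] {a b : α}

lemma map_swap_map_swap (S : Finset α) :
    (S.map (Equiv.swap a b).toEmbedding).map (Equiv.swap a b).toEmbedding = S := by
  ext i
  simp only [mem_map_equiv, Equiv.symm_swap, Equiv.swap_apply_self]

lemma map_swap_subset {s S : Finset α} (ha : a ∈ s) (hb : b ∈ s) (hS : S ⊆ s) :
    S.map (Equiv.swap a b).toEmbedding ⊆ s := fun i hi => by
  rw [mem_map_equiv, Equiv.symm_swap] at hi
  have := hS hi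
  rw [Equiv.swap_apply_def] at this
  split_ifs at this <;> simp_all

lemma sdiff_map_swap {s : Finset α} (ha : a ∈ s) (hb : b ∈ s) (S : Finset α) :
    s \ S.map (Equiv.swap a b).toEmbedding = (s \ S).map (Equiv.swap a b).toEmbedding := by
  ext i
  simp only [mem_map_equiv, Equiv.symm_swap, mem_sdiff, Equiv.swap_apply_def]
  grind

lemma filter_map_swap {p : α → Prop} [DecidablePred p] (hp : ∀ i, p i → i ≠ a ∧ i ≠ b)
    (S : Finset α) : {i ∈ S.map (Equiv.swap a b).toEmbedding | p i} = {i ∈ S | p i} := by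
  ext i
  simp only [mem_filter, mem_map_equiv, Equiv.symm_swap]
  constructor <;> rintro ⟨hi, hpi⟩ <;>
    simpa [hpi, Equiv.swap_apply_of_ne_of_ne (hp i hpi).1 (hp i hpi).2] using hi

end swap

section Vandermonde

variable {ι κ R : Type*} [LinearOrder ι] [LinearOrder κ] [CommRing R]

def vandOn (x : ι → R) (S : Finset ι) : R :=
  ∏ p ∈ (S ×ˢ S).filter (fun p => p.1 < p.2), (x p.2 - x p.1)

lemma vand_eq_vandOn {m : ℕ} (x : Fin m → ℝ) (S : Finset (Fin m)) : vand x S = vandOn x S :=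
  rfl

lemma vandOn_eq_prod_prod (x : ι → R) (S : Finset ι) :
    vandOn x S = ∏ i ∈ S, ∏ j ∈ S, if i < j then x j - x i else 1 := by
  rw [vandOn, prod_filter, prod_product]

lemma vandOn_congr {x y : ι → R} {S : Finset ι} (h : ∀ i ∈ S, x i = y i) :
    vandOn x S = vandOn y S := by
  simp only [vandOn_eq_prod_prod]
  exact prod_congr rfl fun i hi => prod_congr rfl fun j hj => by rw [h i hi, h j hj]

lemma map_vandOn {R' : Type*} [CommRing R'] (f : R →+* R') (x : ι → R) (S : Finset ι) :
    f (vandOn x S) = vandOn (f ∘ x) S := by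
  simp [vandOn, map_prod]

lemma vandOn_map (e : ι ↪o κ) (x : κ → R) (S : Finset ι) :
    vandOn x (S.map e.toEmbedding) = vandOn (x ∘ e) S := by
  simp [vandOn_eq_prod_prod, prod_map]

lemma vandOn_eq_zero_of_apply_eq {x : ι → R} {S : Finset ι} {a b : ι} (ha : a ∈ S) (hb : b ∈ S)
    (hab : a < b) (hx : x a = x b) : vandOn x S = 0 :=
  prod_eq_zero (i := (a, b)) (by simp [ha, hb, hab]) (by simp [hx])

lemma vandOn_insert (x : ι → R) {S : Finset ι} {a : ι} (ha : a ∉ S) :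
    vandOn x (insert a S) =
      (∏ i ∈ S, if i < a then x a - x i else x i - x a) * vandOn x S := by
  simp only [vandOn_eq_prod_prod, prod_insert ha, lt_irrefl, if_false, one_mul,
    prod_mul_distrib]
  rw [← mul_assoc, ← prod_mul_distrib]
  congr 1
  refine prod_congr rfl fun i hi => ?_
  rcases lt_or_gt_of_ne (ne_of_mem_of_not_mem hi ha) with h | h <;> simp [h, h.not_gt]

lemma vandOn_insert_of_forall_lt (x : ι → R) {S : Finset ι} {a : ι} (ha : ∀ i ∈ S, i < a) :
    vandOn x (insert a S) = (∏ i ∈ S, (x a - x i)) * vandOn x S := by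
  rw [vandOn_insert x fun h => (ha a h).false]
  congr 1
  exact prod_congr rfl fun i hi => if_pos (ha i hi)

/-- Only the factors pairing `a` (resp. `b`) with an index strictly between them change sign. -/
lemma vandOn_map_swap {x : ι → R} {S : Finset ι} {a b : ι} (hab : a < b) (hx : x a = x b)
    (ha : a ∈ S) (hb : b ∉ S) :
    vandOn x (S.map (Equiv.swap a b).toEmbedding) =
      (-1) ^ #{i ∈ S | a < i ∧ i < b} * vandOn x S := by
  obtain ⟨T, haT, rfl⟩ : ∃ T, a ∉ T ∧ S = insert a T :=
    ⟨S.erase a, notMem_erase a S, (insert_erase ha).symm⟩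
  have hbT : b ∉ T := fun h => hb (mem_insert_of_mem h)
  have hmap : (insert a T).map (Equiv.swap a b).toEmbedding = insert b T := by
    ext i
    simp only [mem_map_equiv, Equiv.symm_swap, mem_insert, Equiv.swap_apply_def]
    grind
  have hfactor : ∀ i ∈ T, (if i < b then x b - x i else x i - x b) =
      (if a < i ∧ i < b then -1 else 1) * (if i < a then x a - x i else x i - x a) := by
    intro i hi
    rw [← hx]
    split_ifs <;> first | ring1 | grind
  rw [hmap, vandOn_insert x hbT, vandOn_insert x haT, prod_congr rfl hfactor,
    prod_mul_distrib, prod_ite, prod_const, prod_const_one, mul_one, filter_insert,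
    if_neg fun h => lt_irrefl a h.1, mul_assoc]

def vandPairSum (x : ι → R) (s : Finset ι) (k : ℕ) : R :=
  ∑ S ∈ s.powersetCard k, vandOn x S * vandOn x (s \ S)

lemma vandOn_mul_vandOn_sdiff_map_swap {x : ι → R} {s S : Finset ι} {a b : ι} (hab : a < b)
    (hx : x a = x b) (hb : b ∈ s) (hodd : Odd #{i ∈ s | a < i ∧ i < b}) (hS : S ⊆ s)
    (haS : a ∈ S) (hbS : b ∉ S) :
    vandOn x (S.map (Equiv.swap a b).toEmbedding) *
        vandOn x (s \ S.map (Equiv.swap a b).toEmbedding) =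
      -(vandOn x S * vandOn x (s \ S)) := by
  set σ := (Equiv.swap a b).toEmbedding
  set C := (s \ S).map σ
  have hp : ∀ i, a < i ∧ i < b → i ≠ a ∧ i ≠ b := fun i h => ⟨h.1.ne', h.2.ne⟩
  have haC : a ∈ C := by simp [C, σ, mem_map_equiv, hb, hbS]
  have hbC : b ∉ C := by simp [C, σ, mem_map_equiv, haS]
  have hcount : Odd (#{i ∈ C | a < i ∧ i < b} + #{i ∈ S | a < i ∧ i < b}) := by
    have : {i ∈ s \ S | a < i ∧ i < b} = {i ∈ s | a < i ∧ i < b} \ {i ∈ S | a < i ∧ i < b} := by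
      ext i
      simp only [mem_filter, mem_sdiff]
      tauto
    rwa [filter_map_swap hp, this, card_sdiff_add_card_eq_card (filter_subset_filter _ hS)]
  have hsign : (-1 : R) ^ #{i ∈ C | a < i ∧ i < b} = -(-1) ^ #{i ∈ S | a < i ∧ i < b} := by
    rcases Nat.even_or_odd #{i ∈ S | a < i ∧ i < b} with h | h
    · rw [((Nat.odd_add.1 hcount).2 h).neg_one_pow, h.neg_one_pow]
    · rw [((Nat.odd_add'.1 hcount).1 h).neg_one_pow, h.neg_one_pow, neg_neg]
  have hsdiff : s \ S = C.map σ := by rw [map_swap_map_swap]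
  rw [show s \ S.map σ = C from sdiff_map_swap (hS haS) hb S, hsdiff,
    vandOn_map_swap hab hx haS hbS, vandOn_map_swap hab hx haC hbC, hsign]
  ring

/-- Under the involution `S ↦ swap a b '' S`, the terms with exactly one of `a, b` in `S` cancel
in pairs and the others vanish. -/
lemma vandPairSum_eq_zero_of_apply_eq {x : ι → R} {s : Finset ι} {a b : ι} (ha : a ∈ s)
    (hb : b ∈ s) (hab : a < b) (hx : x a = x b) (hodd : Odd #{i ∈ s | a < i ∧ i < b}) (k : ℕ) :
    vandPairSum x s k = 0 := by
  set σ := (Equiv.swap a b).toEmbedding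
  have hzero : ∀ S ⊆ s, (a ∈ S ↔ b ∈ S) → vandOn x S * vandOn x (s \ S) = 0 := by
    intro S hS hiff
    by_cases haS : a ∈ S
    · rw [vandOn_eq_zero_of_apply_eq haS (hiff.1 haS) hab hx, zero_mul]
    · rw [vandOn_eq_zero_of_apply_eq (mem_sdiff.2 ⟨ha, haS⟩)
        (mem_sdiff.2 ⟨hb, mt hiff.2 haS⟩) hab hx, mul_zero]
  have hσ_mem : ∀ S : Finset ι, (a ∈ S.map σ ↔ b ∈ S) ∧ (b ∈ S.map σ ↔ a ∈ S) := fun S => by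
    simp [σ, mem_map_equiv]
  refine sum_involution (fun S _ => S.map σ) (fun S hS => ?_) (fun S hS hne hfix => ?_)
    (fun S hS => ?_) (fun S _ => map_swap_map_swap S)
  · have hS := (mem_powersetCard.1 hS).1
    by_cases hiff : a ∈ S ↔ b ∈ S
    · rw [hzero S hS hiff, hzero _ (map_swap_subset ha hb hS)
        (by rw [(hσ_mem S).1, (hσ_mem S).2]; exact hiff.symm), add_zero]
    by_cases haS : a ∈ S
    · have hbS : b ∉ S := fun hbS => hiff (iff_of_true haS hbS)
      rw [vandOn_mul_vandOn_sdiff_map_swap hab hx hb hodd hS haS hbS, add_neg_cancel]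
    · have hbS : b ∈ S := by tauto
      have := vandOn_mul_vandOn_sdiff_map_swap hab hx hb hodd (map_swap_subset ha hb hS)
        ((hσ_mem S).1.2 hbS) (mt (hσ_mem S).2.1 haS)
      rw [map_swap_map_swap] at this
      rw [this, neg_add_cancel]
  · refine hne (hzero S (mem_powersetCard.1 hS).1 ?_)
    rw [← (hσ_mem S).2, hfix]
  · rw [mem_powersetCard] at hS ⊢
    exact ⟨map_swap_subset ha hb hS.1, by rw [card_map, hS.2]⟩

lemma vandPairSum_insert {x : ι → R} {s : Finset ι} {m : ι} (hm : ∀ i ∈ s, i < m) (k : ℕ) :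
    vandPairSum x (insert m s) (k + 1) =
      ∑ T ∈ s.powersetCard (k + 1), (∏ i ∈ s \ T, (x m - x i)) * (vandOn x T * vandOn x (s \ T)) +
      ∑ T ∈ s.powersetCard k, (∏ i ∈ T, (x m - x i)) * (vandOn x T * vandOn x (s \ T)) := by
  have hms : m ∉ s := fun h => (hm m h).false
  have hmT : ∀ {j}, ∀ T ∈ s.powersetCard j, m ∉ T := fun T hT h =>
    hms ((mem_powersetCard.1 hT).1 h)
  have hdisj : Disjoint (s.powersetCard (k + 1)) ((s.powersetCard k).image (insert m)) := by
    refine disjoint_left.2 fun S hS hS' => ?_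
    obtain ⟨T, -, rfl⟩ := mem_image.1 hS'
    exact hms ((mem_powersetCard.1 hS).1 (mem_insert_self m T))
  rw [vandPairSum, powersetCard_succ_insert hms, sum_union hdisj,
    sum_image fun T hT T' hT' h => by
      rw [← erase_insert (hmT T hT), h, erase_insert (hmT T' hT')]]
  congr 1 <;> refine sum_congr rfl fun T hT => ?_
  · have hsT : ∀ i ∈ s \ T, i < m := fun i hi => hm i (mem_sdiff.1 hi).1
    rw [insert_sdiff_of_notMem s (hmT T hT), vandOn_insert_of_forall_lt x hsT]
    ring
  · have hT' : ∀ i ∈ T, i < m := fun i hi => hm i ((mem_powersetCard.1 hT).1 hi)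
    rw [insert_sdiff_insert, sdiff_insert_of_notMem hms, vandOn_insert_of_forall_lt x hT']
    ring

lemma vandPairSum_card_sub {x : ι → R} {s : Finset ι} {k : ℕ} (hk : k ≤ #s) :
    vandPairSum x s (#s - k) = vandPairSum x s k := by
  refine sum_nbij' (s \ ·) (s \ ·) (fun S hS => ?_) (fun S hS => ?_) (fun S hS => ?_)
    (fun S hS => ?_) (fun S hS => ?_) <;>
    simp only [mem_powersetCard] at hS ⊢
  · rw [card_sdiff_of_subset hS.1, hS.2]
    exact ⟨sdiff_subset, by omega⟩
  · rw [card_sdiff_of_subset hS.1, hS.2]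
    exact ⟨sdiff_subset, rfl⟩
  · exact Finset.sdiff_sdiff_eq_self hS.1
  · exact Finset.sdiff_sdiff_eq_self hS.1
  · rw [Finset.sdiff_sdiff_eq_self hS.1, mul_comm]

lemma map_vandPairSum {R' : Type*} [CommRing R'] (f : R →+* R') (x : ι → R) (s : Finset ι)
    (k : ℕ) : f (vandPairSum x s k) = vandPairSum (f ∘ x) s k := by
  simp [vandPairSum, map_vandOn]

lemma vandPairSum_map (e : ι ↪o κ) (x : κ → R) (s : Finset ι) (k : ℕ) :
    vandPairSum x (s.map e.toEmbedding) k = vandPairSum (x ∘ e) s k := by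
  rw [vandPairSum, powersetCard_map, sum_map]
  refine sum_congr rfl fun S hS => ?_
  simp [← Finset.map_sdiff, vandOn_map]

end Vandermonde

section polynomial

variable {ι R : Type*} [CommRing R]

lemma natDegree_C_mul_prod_X_sub_C_le (a : R) (x : ι → R) (U : Finset ι) :
    (C a * ∏ i ∈ U, (X - C (x i))).natDegree ≤ #U :=
  (natDegree_C_mul_le _ _).trans <| (natDegree_prod_le _ _).trans <|
    (sum_le_sum fun i _ => natDegree_X_sub_C_le (x i)).trans (by simp)

lemma coeff_C_mul_prod_X_sub_C [Nontrivial R] (a : R) (x : ι → R) (U : Finset ι) {k : ℕ}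
    (hk : #U ≤ k) : (C a * ∏ i ∈ U, (X - C (x i))).coeff k = if #U = k then a else 0 := by
  split_ifs with h
  · rw [coeff_C_mul, ← h, ← natDegree_finsetProd_X_sub_C_eq_card U x,
      (monic_prod_of_monic _ _ fun i _ => monic_X_sub_C (x i)).coeff_natDegree, mul_one]
  · exact coeff_eq_zero_of_natDegree_lt ((natDegree_C_mul_prod_X_sub_C_le a x U).trans_lt
      (lt_of_le_of_ne hk h))

lemma eq_C_mul_prod_X_sub_C_of_eval_eq_zero [IsDomain R] {p : R[X]} {x : ι → R} {U : Finset ι}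
    (hx : Set.InjOn x U) (hdeg : p.natDegree ≤ #U) (hroot : ∀ i ∈ U, p.eval (x i) = 0) :
    p = C (p.coeff #U) * ∏ i ∈ U, (X - C (x i)) := by
  refine eq_of_degree_sub_lt_of_eval_index_eq U hx ?_ fun i hi => by
    rw [hroot i hi, eval_mul, eval_prod, prod_eq_zero hi (by simp), mul_zero]
  refine degree_lt_iff_coeff_zero _ _ |>.2 fun j hj => ?_
  have hj : #U ≤ j := by exact_mod_cast hj
  rw [coeff_sub, coeff_C_mul_prod_X_sub_C _ _ _ hj]
  rcases hj.eq_or_lt with h | hlt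
  · rw [if_pos h, h, sub_self]
  · rw [if_neg hlt.ne, coeff_eq_zero_of_natDegree_lt (hdeg.trans_lt hlt), sub_self]

end polynomial

section step

variable {ι R : Type*} [LinearOrder ι] [CommRing R]

/-- `vandPairSum` over `insert m s` as a polynomial in the value at `m`. -/
noncomputable def vandPairPoly (x : ι → R) (s : Finset ι) (k : ℕ) : R[X] :=
  ∑ T ∈ s.powersetCard (k + 1),
      C (vandOn x T * vandOn x (s \ T)) * ∏ i ∈ s \ T, (X - C (x i)) +
    ∑ T ∈ s.powersetCard k, C (vandOn x T * vandOn x (s \ T)) * ∏ i ∈ T, (X - C (x i))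

lemma eval_vandPairPoly {x : ι → R} {s : Finset ι} {m : ι} (hm : ∀ i ∈ s, i < m) (k : ℕ)
    (y : R) :
    (vandPairPoly x s k).eval y = vandPairSum (Function.update x m y) (insert m s) (k + 1) := by
  have hx : ∀ i ∈ s, Function.update x m y i = x i := fun i hi =>
    Function.update_of_ne (hm i hi).ne _ _
  have hvand : ∀ T ⊆ s, vandOn (Function.update x m y) T = vandOn x T := fun T hT =>
    vandOn_congr fun i hi => hx i (hT hi)
  have hprod : ∀ T ⊆ s, ∏ i ∈ T, (Function.update x m y m - Function.update x m y i) =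
      ∏ i ∈ T, (y - x i) := fun T hT =>
    prod_congr rfl fun i hi => by rw [Function.update_self, hx i (hT hi)]
  rw [vandPairSum_insert hm, vandPairPoly, eval_add, eval_finsetSum, eval_finsetSum]
  congr 1 <;> refine sum_congr rfl fun T hT => ?_ <;>
    simp only [eval_mul, eval_C, eval_prod, eval_sub, eval_X, hvand _ sdiff_subset,
      hvand T (mem_powersetCard.1 hT).1, hprod _ sdiff_subset, hprod T (mem_powersetCard.1 hT).1,
      mul_comm]

lemma natDegree_vandPairPoly_le (x : ι → R) (s : Finset ι) {k : ℕ} (hk : #s ≤ 2 * k + 1) :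
    (vandPairPoly x s k).natDegree ≤ k := by
  refine (natDegree_add_le _ _).trans (max_le ?_ ?_) <;>
    refine natDegree_sum_le_of_forall_le _ _ fun T hT => ?_ <;>
    refine (natDegree_C_mul_prod_X_sub_C_le _ _ _).trans ?_ <;>
    rw [mem_powersetCard] at hT
  · rw [card_sdiff_of_subset hT.1, hT.2]
    omega
  · exact hT.2.le

lemma coeff_vandPairPoly [Nontrivial R] (x : ι → R) (s : Finset ι) {k : ℕ}
    (hk : #s ≤ 2 * k + 1) :
    (vandPairPoly x s k).coeff k =
      vandPairSum x s k + if #s = 2 * k + 1 then vandPairSum x s (k + 1) else 0 := by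
  have hcard : ∀ T ∈ s.powersetCard (k + 1), #(s \ T) = k ↔ #s = 2 * k + 1 := fun T hT => by
    rw [mem_powersetCard] at hT
    have := card_le_card hT.1
    rw [card_sdiff_of_subset hT.1, hT.2]
    omega
  have hfirst : ∀ T ∈ s.powersetCard (k + 1),
      (C (vandOn x T * vandOn x (s \ T)) * ∏ i ∈ s \ T, (X - C (x i))).coeff k =
        if #s = 2 * k + 1 then vandOn x T * vandOn x (s \ T) else 0 := fun T hT => by
    rw [← if_congr (hcard T hT) rfl rfl]
    rw [mem_powersetCard] at hT
    refine coeff_C_mul_prod_X_sub_C _ _ _ ?_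
    rw [card_sdiff_of_subset hT.1, hT.2]
    omega
  have hsecond : ∀ T ∈ s.powersetCard k,
      (C (vandOn x T * vandOn x (s \ T)) * ∏ i ∈ T, (X - C (x i))).coeff k =
        vandOn x T * vandOn x (s \ T) := fun T hT => by
    rw [coeff_C_mul_prod_X_sub_C _ _ _ (mem_powersetCard.1 hT).2.le,
      if_pos (mem_powersetCard.1 hT).2]
  rw [vandPairPoly, coeff_add, finsetSum_coeff, finsetSum_coeff, sum_congr rfl hfirst,
    sum_congr rfl hsecond, sum_ite_irrel, sum_const_zero, add_comm, vandPairSum, vandPairSum]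

lemma vandPairSum_insert_eq_of_update_eq_zero [IsDomain R] {x : ι → R} {s J : Finset ι} {m : ι}
    {k : ℕ} (hm : ∀ i ∈ s, i < m) (hk : #s ≤ 2 * k + 1) (hJ : #J = k) (hx : Set.InjOn x J)
    (hroot : ∀ j ∈ J, vandPairSum (Function.update x m (x j)) (insert m s) (k + 1) = 0) :
    vandPairSum x (insert m s) (k + 1) =
      (vandPairSum x s k + if #s = 2 * k + 1 then vandPairSum x s (k + 1) else 0) *
        ∏ j ∈ J, (x m - x j) := by
  subst hJ
  have hP := eq_C_mul_prod_X_sub_C_of_eval_eq_zero hx (natDegree_vandPairPoly_le x s hk)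
    fun j hj => by rw [eval_vandPairPoly hm, hroot j hj]
  rw [coeff_vandPairPoly x s hk] at hP
  simpa [eval_vandPairPoly hm, eval_prod] using congrArg (eval (x m)) hP

end step

section range

variable {R : Type*} [CommRing R]

lemma card_filter_range_mod_two_eq (m : ℕ) : #{j ∈ range m | j % 2 = m % 2} = m / 2 := by
  have : {j ∈ range m | j % 2 = m % 2} = (range (m / 2)).image (fun i => 2 * i + m % 2) := by
    ext j
    simp only [mem_filter, mem_range, mem_image]
    constructor
    · rintro ⟨hj, hjm⟩
      exact ⟨j / 2, by omega, by omega⟩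
    · rintro ⟨i, hi, rfl⟩
      omega
  rw [this, card_image_of_injective _ fun i j h => by simpa using h, card_range]

lemma vandOn_mod_two_classes_range_succ (x : ℕ → R) (m : ℕ) :
    vandOn x {i ∈ range (m + 1) | i % 2 = 0} * vandOn x {i ∈ range (m + 1) | i % 2 = 1} =
      (∏ j ∈ range m with j % 2 = m % 2, (x m - x j)) *
        (vandOn x {i ∈ range m | i % 2 = 0} * vandOn x {i ∈ range m | i % 2 = 1}) := by
  have hlt : ∀ r, ∀ i ∈ {i ∈ range m | i % 2 = r}, i < m := fun r i hi =>
    mem_range.1 (mem_filter.1 hi).1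
  rw [range_add_one, filter_insert, filter_insert]
  rcases Nat.mod_two_eq_zero_or_one m with h | h <;>
    simp only [h, if_true, if_false, zero_ne_one, one_ne_zero] <;>
    rw [vandOn_insert_of_forall_lt x (hlt _)] <;> ring

lemma vandPairSum_update_eq_zero_of_mod_two_eq (x : ℕ → R) {j m : ℕ} (hjm : j < m)
    (hpar : j % 2 = m % 2) (k : ℕ) :
    vandPairSum (Function.update x m (x j)) (range (m + 1)) k = 0 := by
  have hbetween : {i ∈ range (m + 1) | j < i ∧ i < m} = Ioo j m := by
    ext i
    simp only [mem_filter, mem_range, mem_Ioo]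
    omega
  refine vandPairSum_eq_zero_of_apply_eq (mem_range.2 (by omega)) (self_mem_range_succ m) hjm
    ?_ ?_ k
  · rw [Function.update_self, Function.update_of_ne hjm.ne]
  · rw [hbetween, Nat.card_Ioo, Nat.odd_iff]
    omega

theorem vandPairSum_range_of_injective [IsDomain R] {x : ℕ → R} (hx : Function.Injective x)
    (M : ℕ) :
    vandPairSum x (range M) ((M + 1) / 2) =
      2 ^ (M / 2) * (vandOn x {i ∈ range M | i % 2 = 0} * vandOn x {i ∈ range M | i % 2 = 1}) := by
  induction M with
  | zero => simp [vandPairSum, vandOn]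
  | succ m ih =>
    have hcoeff : (vandPairSum x (range m) (m / 2) +
        if #(range m) = 2 * (m / 2) + 1 then vandPairSum x (range m) (m / 2 + 1) else 0) =
        2 ^ ((m + 1) / 2) *
          (vandOn x {i ∈ range m | i % 2 = 0} * vandOn x {i ∈ range m | i % 2 = 1}) := by
      rw [card_range]
      obtain ⟨k, rfl | rfl⟩ := Nat.even_or_odd' m
      · rw [show 2 * k / 2 = k by omega, show (2 * k + 1) / 2 = k by omega] at ih ⊢
        rw [if_neg (by omega), add_zero, ih]
      · rw [show (2 * k + 1) / 2 = k by omega, show (2 * k + 1 + 1) / 2 = k + 1 by omega] at ih ⊢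
        have hsymm := vandPairSum_card_sub (x := x) (s := range (2 * k + 1)) (k := k)
          (by simp; omega)
        rw [card_range, show 2 * k + 1 - k = k + 1 by omega] at hsymm
        rw [if_pos rfl, ← hsymm, ih, pow_succ]
        ring
    have hroot : ∀ j ∈ {j ∈ range m | j % 2 = m % 2},
        vandPairSum (Function.update x m (x j)) (insert m (range m)) (m / 2 + 1) = 0 := by
      intro j hj
      rw [mem_filter, mem_range] at hj
      rw [← range_add_one]
      exact vandPairSum_update_eq_zero_of_mod_two_eq x hj.1 hj.2 _
    rw [show (m + 1 + 1) / 2 = m / 2 + 1 by omega, range_add_one,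
      vandPairSum_insert_eq_of_update_eq_zero (fun i hi => mem_range.1 hi) (by simp; omega)
        (card_filter_range_mod_two_eq m) hx.injOn hroot, ← range_add_one,
      vandOn_mod_two_classes_range_succ, hcoeff]
    ring

/-- The identity is polynomial in `x`, so it specializes from the generic point `MvPolynomial.X`. -/
theorem vandPairSum_range (x : ℕ → R) (M : ℕ) :
    vandPairSum x (range M) ((M + 1) / 2) =
      2 ^ (M / 2) * (vandOn x {i ∈ range M | i % 2 = 0} * vandOn x {i ∈ range M | i % 2 = 1}) := by
  have h := congrArg (MvPolynomial.eval₂Hom (Int.castRingHom R) x)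
    (vandPairSum_range_of_injective (MvPolynomial.X_injective (σ := ℕ) (R := ℤ)) M)
  have hx : MvPolynomial.eval₂Hom (Int.castRingHom R) x ∘ MvPolynomial.X = x := by
    funext i
    simp
  rwa [map_vandPairSum, map_mul, map_mul, map_pow, map_ofNat, map_vandOn, map_vandOn, hx] at h

lemma vandOn_filter_range_mod_two (x : ℕ → R) {M N r : ℕ} (hM : M ≤ 2 * N + r)
    (hN : 2 * N + r < M + 2) (hr : r < 2) :
    vandOn x {j ∈ range M | j % 2 = r} = vandOn (fun i : Fin N => x (2 * i + r)) univ := by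
  let e : Fin N ↪o ℕ := OrderEmbedding.ofStrictMono (fun i => 2 * i + r) fun i j h => by
    simpa using h
  have he : ∀ i, e i = 2 * i + r := fun _ => rfl
  have : {j ∈ range M | j % 2 = r} = univ.map e.toEmbedding := by
    ext j
    simp only [mem_filter, mem_range, mem_map, mem_univ, true_and, RelEmbedding.coe_toEmbedding,
      he]
    constructor
    · rintro ⟨h1, h2⟩
      exact ⟨⟨j / 2, by omega⟩, by simp only; omega⟩
    · rintro ⟨i, rfl⟩
      omega
  rw [this, vandOn_map]
  rfl

end range

/-- For `x_0 < x_1 < ⋯ < x_{2n}`, the sum over `(n+1)`-element subsets `S` of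
`Δ(x_S) Δ(x_{Sᶜ})` equals `2^n Δ(x_0,x_2,…,x_{2n}) Δ(x_1,x_3,…,x_{2n-1})`. -/
theorem sum_vandermonde_pairs_odd (n : ℕ) (x : Fin (2 * n + 1) → ℝ) :
    (∑ S ∈ Finset.powersetCard (n + 1) (Finset.univ : Finset (Fin (2 * n + 1))),
        vand x S * vand x Sᶜ)
      = 2 ^ n *
        vand (fun i : Fin (n + 1) => x ⟨2 * i.1, by have := i.2; omega⟩) Finset.univ *
        vand (fun i : Fin n => x ⟨2 * i.1 + 1, by have := i.2; omega⟩) Finset.univ := by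
  set y : ℕ → ℝ := fun i => x (Fin.ofNat _ i)
  have hy : ∀ i (hi : i < 2 * n + 1), y i = x ⟨i, hi⟩ := fun i hi => by
    simp [y, Fin.ofNat, Nat.mod_eq_of_lt hi]
  have hyx : y ∘ Fin.valOrderEmb _ = x := funext fun i => hy i i.2
  have hLHS : vandPairSum x univ (n + 1) = vandPairSum y (range (2 * n + 1)) (n + 1) := by
    rw [← Nat.Iio_eq_range, ← Fin.map_valEmbedding_univ, ← hyx]
    exact (vandPairSum_map (Fin.valOrderEmb _) y univ (n + 1)).symm
  have key := vandPairSum_range y (2 * n + 1)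
  rw [show (2 * n + 1 + 1) / 2 = n + 1 by omega, show (2 * n + 1) / 2 = n by omega,
    vandOn_filter_range_mod_two y (N := n + 1) (by omega) (by omega) (by omega),
    vandOn_filter_range_mod_two y (N := n) (by omega) (by omega) (by omega)] at key
  simp only [vand_eq_vandOn, compl_eq_univ_sdiff]
  rw [← vandPairSum, hLHS, key, mul_assoc]
  congr 2 <;> exact vandOn_congr fun i _ => hy _ _
end

section
/- Fix an integer l > 0 and a function G: ℝ → ℝ supported on at least l points. If functions F_0,...,F_{l-1}: ℝ → ℝ satisfy det(F_j(x_i))_{0≤i,j<l} = c·∏_i G(x_i)·∏_{i<j}(x_j−x_i) for some nonzero constant c and all real x_0,...,x_{l-1}, then there exist l linearly independent polynomials p_0,...,p_{l-1}, each of degree at most l−1, with F_i(x) = p_i(x)·G(x) for all i and all x. Conversely, if such polynomials exist then the determinant identity holds with some nonzero constant c. -/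
/-!
Writing `p_i = ∑_j B i j X^j`, both sides say that `F(x) = G(x) · B (x^j)_j` for an invertible
matrix `B`. If so, `(F_j(x_i)) = diag(G(x_i)) · V(x) · Bᵀ` with `V` the Vandermonde matrix,
whence the determinant identity with `c = det B`. Conversely, fix distinct points
`y_0, …, y_{l-1}` where `G` does not vanish, so that `A = (F_j(y_i))` is invertible. Moving the
single point `y_k` to `x` turns the determinant identity into
`det(A with row k replaced by F(x)) = G(x) · d_k · det(V(y) with row k replaced by (x^j)_j)`,
where `d_k = c ∏_{i ≠ k} G(y_i)`, and Cramer's rule for `Aᵀ` and for `V(y)ᵀ` solves these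
`l` equations for `F(x)`.
-/

open Polynomial Matrix Finset

variable {K : Type*} [Field K] {l : ℕ}

theorem Polynomial.mem_degreeLT_iff_natDegree_le_sub_one (hl : 0 < l) {p : K[X]} :
    p ∈ degreeLT K l ↔ p.natDegree ≤ l - 1 := by
  obtain ⟨m, rfl⟩ := Nat.exists_eq_add_one_of_ne_zero hl.ne'
  rw [degreeLT_succ_eq_degreeLE, mem_degreeLE, natDegree_le_iff_degree_le, Nat.add_sub_cancel]

theorem linearIndependent_degreeLTEquiv_symm_iff (B : Matrix (Fin l) (Fin l) K) :
    LinearIndependent K (fun i => ((degreeLTEquiv K l).symm (B i) : K[X])) ↔ B.det ≠ 0 := by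
  let f : (Fin l → K) →ₗ[K] K[X] :=
    (degreeLT K l).subtype ∘ₗ (degreeLTEquiv K l).symm.toLinearMap
  have hf : LinearMap.ker f = ⊥ :=
    LinearMap.ker_eq_bot.2 (Subtype.val_injective.comp (degreeLTEquiv K l).symm.injective)
  rw [← isUnit_iff_ne_zero, ← isUnit_iff_isUnit_det, ← linearIndependent_rows_iff_isUnit,
    ← f.linearIndependent_iff hf]
  rfl

theorem exists_linearIndependent_polynomial_mul_iff {F : Fin l → K → K} {G : K → K} :
    (∃ p : Fin l → K[X], LinearIndependent K p ∧ (∀ i, (p i).natDegree ≤ l - 1) ∧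
        ∀ i x, F i x = (p i).eval x * G x) ↔
      ∃ B : Matrix (Fin l) (Fin l) K, B.det ≠ 0 ∧
        ∀ i x, F i x = (B *ᵥ fun j => x ^ (j : ℕ)) i * G x := by
  have heval (v : Fin l → K) (x : K) :
      ((degreeLTEquiv K l).symm v : K[X]).eval x = v ⬝ᵥ fun j => x ^ (j : ℕ) := by
    rw [eval_eq_sum_degreeLTEquiv (Submodule.coe_mem _)]
    simp [dotProduct]
  constructor
  · rintro ⟨p, hp, hdeg, hF⟩
    have hmem (i : Fin l) : p i ∈ degreeLT K l :=
      (mem_degreeLT_iff_natDegree_le_sub_one i.pos).2 (hdeg i)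
    let B : Matrix (Fin l) (Fin l) K := fun i => degreeLTEquiv K l ⟨p i, hmem i⟩
    have hpB (i : Fin l) : ((degreeLTEquiv K l).symm (B i) : K[X]) = p i := by simp [B]
    refine ⟨B, ?_, fun i x => ?_⟩
    · rw [← linearIndependent_degreeLTEquiv_symm_iff]
      simpa only [hpB] using hp
    · rw [hF, ← hpB, heval]
      rfl
  · rintro ⟨B, hB, hF⟩
    refine ⟨fun i => (degreeLTEquiv K l).symm (B i),
      (linearIndependent_degreeLTEquiv_symm_iff B).2 hB,
      fun i => (mem_degreeLT_iff_natDegree_le_sub_one i.pos).1 (Submodule.coe_mem _),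
      fun i x => ?_⟩
    rw [hF, heval]
    rfl

theorem Matrix.of_update_eq_updateRow {m n α R : Type*} [DecidableEq m] (f : n → α → R)
    (y : m → α) (k : m) (x : α) :
    (of fun i j => f j (Function.update y k x i)) =
      (of fun i j => f j (y i)).updateRow k (f · x) := by
  ext i j
  by_cases hik : i = k
  · subst hik; simp
  · simp [hik]

theorem Matrix.eq_smul_mulVec_of_det_updateRow_eq {n : Type*} [Fintype n] [DecidableEq n]
    {A V : Matrix n n K} (hA : A.det ≠ 0) (d : n → K) {b w : n → K} {g : K}
    (h : ∀ k, (A.updateRow k b).det = g * (d k * (V.updateRow k w).det)) :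
    b = g • ((A.det⁻¹ • Aᵀ * diagonal d * Vᵀ.adjugate) *ᵥ w) := by
  have hcramer : Aᵀ.cramer b = g • (diagonal d *ᵥ (Vᵀ.adjugate *ᵥ w)) := by
    ext k
    rw [cramer_transpose_apply, h, ← cramer_transpose_apply, cramer_eq_adjugate_mulVec,
      Pi.smul_apply, mulVec_diagonal, smul_eq_mul]
  calc b = A.det⁻¹ • (Aᵀ *ᵥ Aᵀ.cramer b) := by
        rw [mulVec_cramer, det_transpose, smul_smul, inv_mul_cancel₀ hA, one_smul]
    _ = _ := by
        rw [hcramer, mulVec_smul, smul_comm, ← mulVec_mulVec, ← mulVec_mulVec, smul_mulVec]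

theorem det_of_eq_mulVec_pow_mul {F : Fin l → K → K} {G : K → K}
    {B : Matrix (Fin l) (Fin l) K} (hF : ∀ i x, F i x = (B *ᵥ fun j => x ^ (j : ℕ)) i * G x)
    (x : Fin l → K) :
    (of fun i j => F j (x i)).det = B.det * (∏ i, G (x i)) * (vandermonde x).det := by
  have hfactor :
      (of fun i j => F j (x i)) = diagonal (fun i => G (x i)) * (vandermonde x * Bᵀ) := by
    ext i j
    rw [diagonal_mul]
    simp [hF, mulVec, dotProduct, mul_apply, mul_comm]
  rw [hfactor, det_mul, det_mul, det_diagonal, det_transpose]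
  ring

theorem exists_det_eq_and_eq_mulVec_pow_mul {F : Fin l → K → K} {G : K → K} {c : K}
    (hc : c ≠ 0) (hG : ∃ s : Finset K, l ≤ s.card ∧ ∀ x ∈ s, G x ≠ 0)
    (hdet : ∀ x : Fin l → K,
      (of fun i j => F j (x i)).det = c * (∏ i, G (x i)) * (vandermonde x).det) :
    ∃ B : Matrix (Fin l) (Fin l) K, B.det = c ∧
      ∀ i x, F i x = (B *ᵥ fun j => x ^ (j : ℕ)) i * G x := by
  obtain ⟨s, hs, hGs⟩ := hG
  obtain ⟨e⟩ : Nonempty (Fin l ↪ s) :=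
    Function.Embedding.nonempty_of_card_le (by simpa using hs)
  set y : Fin l → K := fun i => e i
  have hP : (∏ i, G (y i)) * (vandermonde y).det ≠ 0 :=
    mul_ne_zero (prod_ne_zero_iff.2 fun i _ => hGs _ (e i).2)
      (det_vandermonde_ne_zero_iff.2 (Subtype.val_injective.comp e.injective))
  set A : Matrix (Fin l) (Fin l) K := of fun i j => F j (y i)
  have hA : A.det ≠ 0 := by
    rw [hdet, mul_assoc]
    exact mul_ne_zero hc hP
  let d (k : Fin l) : K := c * ∏ i ∈ univ \ {k}, G (y i)
  have hrow (x : K) (k : Fin l) : (A.updateRow k (F · x)).det =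
      G x * (d k * ((vandermonde y).updateRow k fun j => x ^ (j : ℕ)).det) := by
    have hV : vandermonde (Function.update y k x) = (vandermonde y).updateRow k _ :=
      of_update_eq_updateRow (fun (j : Fin l) (t : K) => t ^ (j : ℕ)) y k x
    have hprod : ∏ i, G (Function.update y k x i) = G x * ∏ i ∈ univ \ {k}, G (y i) := by
      rw [← prod_update_of_mem (mem_univ k)]
      exact prod_congr rfl fun i _ => Function.apply_update (fun _ => G) y k x i
    rw [← of_update_eq_updateRow, hdet, hV, hprod]
    ring
  let B := A.det⁻¹ • Aᵀ * diagonal d * (vandermonde y)ᵀ.adjugate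
  have hF (i : Fin l) (x : K) : F i x = (B *ᵥ fun j => x ^ (j : ℕ)) i * G x := by
    rw [mul_comm]
    exact congrFun (eq_smul_mulVec_of_det_updateRow_eq hA d (hrow x)) i
  refine ⟨B, mul_right_cancel₀ hP ?_, hF⟩
  rw [← mul_assoc, ← det_of_eq_mulVec_pow_mul hF, hdet, mul_assoc]

theorem pseudo_orthogonal_ensemble_iff_general (l : ℕ) (G : ℝ → ℝ)
    (hG : ∃ s : Finset ℝ, l ≤ s.card ∧ ∀ x ∈ s, G x ≠ 0)
    (F : Fin l → ℝ → ℝ) :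
    (∃ c : ℝ, c ≠ 0 ∧ ∀ x : Fin l → ℝ,
        (Matrix.of fun i j : Fin l => F j (x i)).det
          = c * (∏ i : Fin l, G (x i)) * ∏ i : Fin l, ∏ j ∈ Finset.Ioi i, (x j - x i))
    ↔ (∃ p : Fin l → Polynomial ℝ, LinearIndependent ℝ p ∧
        (∀ i, (p i).natDegree ≤ l - 1) ∧
        ∀ i x, F i x = (p i).eval x * G x) := by
  simp_rw [← det_vandermonde]
  rw [exists_linearIndependent_polynomial_mul_iff]
  constructor
  · rintro ⟨c, hc, hdet⟩
    obtain ⟨B, hBc, hF⟩ := exists_det_eq_and_eq_mulVec_pow_mul hc hG hdet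
    exact ⟨B, hBc ▸ hc, hF⟩
  · rintro ⟨B, hB, hF⟩
    exact ⟨B.det, hB, det_of_eq_mulVec_pow_mul hF⟩

/-- Characterization of orthogonal pseudo-ensembles which are orthogonal
ensembles:  `det(F_j(x_i)) = c ∏_i G(x_i) ∏_{i<j}(x_j - x_i)` for some
nonzero constant `c` iff each `F_i` is of the form `p_i · G` for linearly
independent polynomials `p_i` of degree at most `l - 1`. -/
theorem pseudo_orthogonal_ensemble_iff (l : ℕ) (hl : 0 < l) (G : ℝ → ℝ)
    (hG : ∃ s : Finset ℝ, l ≤ s.card ∧ ∀ x ∈ s, G x ≠ 0)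
    (F : Fin l → ℝ → ℝ) :
    (∃ c : ℝ, c ≠ 0 ∧ ∀ x : Fin l → ℝ,
        (Matrix.of fun i j : Fin l => F j (x i)).det
          = c * (∏ i : Fin l, G (x i)) * ∏ i : Fin l, ∏ j ∈ Finset.Ioi i, (x j - x i))
    ↔ (∃ p : Fin l → Polynomial ℝ, LinearIndependent ℝ p ∧
        (∀ i, (p i).natDegree ≤ l - 1) ∧
        ∀ i x, F i x = (p i).eval x * G x) :=
  pseudo_orthogonal_ensemble_iff_general l G hG F
end
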